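/- arXiv:2509.09463 — 4 statements merged into one kernel-verified Lean document; each statement's English description precedes it below -/
import Mathlib

section
/- There exists a tensor T ∈ k^{n₁} ⊗ k^{n₂} ⊗ k^{n₃} with multilinear rank (μ₁, μ₂, μ₃) if and only if μᵢ ≤ nᵢ for all i and μ₁ ≤ μ₂·μ₃, μ₂ ≤ μ₁·μ₃, μ₃ ≤ μ₁·μ₂. -/
/-!
Necessity: a row of `T₍₁₎`, read as an `n₂ × n₃` matrix, has its columns in the column space
`U₂` of `T₍₂₎` and its rows in the column space `U₃` of `T₍₃₎`. With projections `Eᵢ` onto `Uᵢ`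
this says `(E₂ ⊗ E₃) T₍₁₎ᵀ = T₍₁₎ᵀ`, hence `rank T₍₁₎ ≤ rank (E₂ ⊗ E₃) ≤ μ₂ μ₃`.

Sufficiency: when `μ₁` is the largest, choose `μ₁` cells of the `μ₂ × μ₃` grid meeting every row
and every column, and let `T` be the `0/1` tensor with `T t j l = 1` iff `(j, l)` is the `t`-th
cell. Any two coordinates of a point of the support determine the third, so in every flattening
the nonzero rows have disjoint supports and the rank is the number of nonzero rows.
-/

open Function Finset Matrix
open scoped Kronecker

namespace Matrix

variable {k : Type*} [Field k] {m n : Type*} [Fintype n]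

theorem exists_rank_factorization (A : Matrix m n k) :
    ∃ (P : Matrix m (Fin A.rank) k) (Q : Matrix (Fin A.rank) n k), P * Q = A := by
  classical
  let V := LinearMap.range A.mulVecLin
  let e : V ≃ₗ[k] (Fin A.rank → k) :=
    LinearEquiv.ofFinrankEq _ _ (by rw [Module.finrank_fin_fun]; rfl)
  refine ⟨LinearMap.toMatrix' (V.subtype ∘ₗ e.symm.toLinearMap),
    LinearMap.toMatrix' (e.toLinearMap ∘ₗ A.mulVecLin.rangeRestrict), ?_⟩
  rw [← LinearMap.toMatrix'_comp, LinearMap.comp_assoc, ← LinearMap.comp_assoc _ e.toLinearMap,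
    LinearEquiv.symm_comp, LinearMap.id_comp]
  exact LinearMap.toMatrix'_toLin' A

theorem rank_kronecker_le {m' n' : Type*} [Fintype n'] (A : Matrix m n k)
    (B : Matrix m' n' k) : (A ⊗ₖ B).rank ≤ A.rank * B.rank := by
  obtain ⟨P, Q, hA⟩ := A.exists_rank_factorization
  obtain ⟨P', Q', hB⟩ := B.exists_rank_factorization
  calc (A ⊗ₖ B).rank = (P ⊗ₖ P' * Q ⊗ₖ Q').rank := by rw [← mul_kronecker_mul, hA, hB]
    _ ≤ (P ⊗ₖ P').rank := rank_mul_le_left _ _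
    _ ≤ Fintype.card (Fin A.rank × Fin B.rank) := rank_le_card_width _
    _ = A.rank * B.rank := by simp

theorem exists_mul_eq_self_rank_eq [Fintype m] (A : Matrix m n k) :
    ∃ E : Matrix m m k, E * A = A ∧ E.rank = A.rank := by
  classical
  let V := LinearMap.range A.mulVecLin
  obtain ⟨W, hVW⟩ := V.exists_isCompl
  refine ⟨LinearMap.toMatrix' (V.projection W hVW), ?_, ?_⟩
  · refine Matrix.toLin'.injective (LinearMap.ext fun x => ?_)
    simpa [Matrix.toLin'_mul] using
      Submodule.projection_apply_of_mem_left hVW (LinearMap.mem_range_self _ x)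
  · rw [rank, ← Matrix.toLin'_apply', Matrix.toLin'_toMatrix', Submodule.range_projection]
    rfl

theorem rank_of_indicator_eq_card_image {R : Type*} [CommSemiring R] [Nontrivial R]
    [StrongRankCondition R] [DecidableEq m] [DecidableEq n] {ι : Type*} [Fintype ι]
    (r : ι → m) (c : ι → n) (hc : Injective c) :
    (of fun i j => if ∃ t, r t = i ∧ c t = j then (1 : R) else 0).rank = #(univ.image r) := by
  refine le_antisymm (rank_le_card_of_support_subset _ _ ?_) ?_
  · rw [support_subset_iff']
    intro i hi
    ext j
    simp only [row, of_apply, Pi.zero_apply, ite_eq_right_iff, one_ne_zero, imp_false, not_exists,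
      not_and]
    exact fun t hti _ => hi (hti ▸ mem_image_of_mem r (mem_univ t))
  · have hsurj : ∀ i : univ.image r, ∃ t, r t = i := fun i => by simpa using mem_image.mp i.2
    choose τ hτ using hsurj
    have hsub : (of fun i j => if ∃ t, r t = i ∧ c t = j then (1 : R) else 0).submatrix
        (Subtype.val : univ.image r → m) (c ∘ τ) = 1 := by
      ext i i'
      change (if ∃ t, r t = i ∧ c t = c (τ i') then (1 : R) else 0) = _
      simp only [hc.eq_iff, exists_eq_right, hτ, Subtype.val_inj, one_apply]
      exact if_congr eq_comm rfl rfl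
    calc #(univ.image r) = (1 : Matrix (univ.image r) (univ.image r) R).rank := by
          rw [rank_one, Fintype.card_coe]
      _ = _ := by rw [← hsub]
      _ ≤ _ := rank_submatrix_le _ _ _

theorem rank_of_prod_swap {R : Type*} [CommSemiring R] {m n o : Type*} [Fintype n] [Fintype o]
    (A : Matrix m (n × o) R) :
    (of fun i (p : o × n) => A i p.swap).rank = A.rank :=
  rank_submatrix A (Equiv.refl m) (Equiv.prodComm o n)

end Matrix

section Flattening

variable {k : Type*} {ι₁ ι₂ ι₃ : Type*}

def flattening₁ (T : ι₁ → ι₂ → ι₃ → k) : Matrix ι₁ (ι₂ × ι₃) k := of fun i p => T i p.1 p.2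

def flattening₂ (T : ι₁ → ι₂ → ι₃ → k) : Matrix ι₂ (ι₁ × ι₃) k := of fun j p => T p.1 j p.2

def flattening₃ (T : ι₁ → ι₂ → ι₃ → k) : Matrix ι₃ (ι₁ × ι₂) k := of fun l p => T p.1 p.2 l

variable [Field k] [Fintype ι₂] [Fintype ι₃]

theorem kronecker_mul_transpose_flattening₁ (T : ι₁ → ι₂ → ι₃ → k) {E₂ : Matrix ι₂ ι₂ k}
    {E₃ : Matrix ι₃ ι₃ k} (h₂ : E₂ * flattening₂ T = flattening₂ T)
    (h₃ : E₃ * flattening₃ T = flattening₃ T) :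
    E₂ ⊗ₖ E₃ * (flattening₁ T)ᵀ = (flattening₁ T)ᵀ := by
  have h₂' (i j l) : ∑ j', E₂ j j' * T i j' l = T i j l := congr_fun₂ h₂ j (i, l)
  have h₃' (i j l) : ∑ l', E₃ l l' * T i j l' = T i j l := congr_fun₂ h₃ l (i, j)
  ext ⟨j, l⟩ i
  calc ∑ p : ι₂ × ι₃, E₂ j p.1 * E₃ l p.2 * T i p.1 p.2
      = ∑ j', E₂ j j' * ∑ l', E₃ l l' * T i j' l' := by
        simp only [Fintype.sum_prod_type, Finset.mul_sum, mul_assoc]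
    _ = T i j l := by simp only [h₃', h₂']

theorem rank_flattening₁_le_mul [Fintype ι₁] (T : ι₁ → ι₂ → ι₃ → k) :
    (flattening₁ T).rank ≤ (flattening₂ T).rank * (flattening₃ T).rank := by
  obtain ⟨E₂, hE₂, hr₂⟩ := (flattening₂ T).exists_mul_eq_self_rank_eq
  obtain ⟨E₃, hE₃, hr₃⟩ := (flattening₃ T).exists_mul_eq_self_rank_eq
  calc (flattening₁ T).rank = (E₂ ⊗ₖ E₃ * (flattening₁ T)ᵀ).rank := by
        rw [kronecker_mul_transpose_flattening₁ T hE₂ hE₃, rank_transpose]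
    _ ≤ (E₂ ⊗ₖ E₃).rank := rank_mul_le_left _ _
    _ ≤ E₂.rank * E₃.rank := rank_kronecker_le _ _
    _ = (flattening₂ T).rank * (flattening₃ T).rank := by rw [hr₂, hr₃]

theorem rank_flattening₂_le_mul [Fintype ι₁] (T : ι₁ → ι₂ → ι₃ → k) :
    (flattening₂ T).rank ≤ (flattening₁ T).rank * (flattening₃ T).rank := by
  have h := rank_flattening₁_le_mul fun j i l => T i j l
  rwa [show flattening₃ (fun j i l => T i j l) = of fun l p => flattening₃ T l p.swap from rfl,
    rank_of_prod_swap] at h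

theorem rank_flattening₃_le_mul [Fintype ι₁] (T : ι₁ → ι₂ → ι₃ → k) :
    (flattening₃ T).rank ≤ (flattening₁ T).rank * (flattening₂ T).rank := by
  have h := rank_flattening₁_le_mul fun l i j => T i j l
  rwa [show flattening₂ (fun l i j => T i j l) = of fun i p => flattening₁ T i p.swap from rfl,
    show flattening₃ (fun l i j => T i j l) = of fun j p => flattening₂ T j p.swap from rfl,
    rank_of_prod_swap, rank_of_prod_swap] at h

end Flattening

theorem exists_tensor_rank_flattening_eq_card_image {k : Type*} [Field k]
    {ι₁ ι₂ ι₃ ι : Type*} [Fintype ι₁] [Fintype ι₂] [Fintype ι₃] [Fintype ι]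
    [DecidableEq ι₁] [DecidableEq ι₂] [DecidableEq ι₃] (a : ι → ι₁) (b : ι → ι₂) (c : ι → ι₃)
    (hbc : Injective fun t => (b t, c t)) (hac : Injective fun t => (a t, c t))
    (hab : Injective fun t => (a t, b t)) :
    ∃ T : ι₁ → ι₂ → ι₃ → k, (flattening₁ T).rank = #(univ.image a) ∧
      (flattening₂ T).rank = #(univ.image b) ∧ (flattening₃ T).rank = #(univ.image c) := by
  refine ⟨fun i j l => if ∃ t, a t = i ∧ b t = j ∧ c t = l then 1 else 0, ?_, ?_, ?_⟩
  · convert rank_of_indicator_eq_card_image (R := k) a _ hbc using 4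
    simp [flattening₁, Prod.ext_iff]
  · convert rank_of_indicator_eq_card_image (R := k) b _ hac using 4
    simp [flattening₂, Prod.ext_iff, and_left_comm]
  · convert rank_of_indicator_eq_card_image (R := k) c _ hab using 4
    simp [flattening₃, Prod.ext_iff, and_rotate]

theorem exists_embedding_fin_prod_surjective {α β γ : ℕ} (hβ : β ≤ α) (hγ : γ ≤ α)
    (hα : α ≤ β * γ) :
    ∃ g : Fin α ↪ Fin β × Fin γ, Surjective (Prod.fst ∘ g) ∧ Surjective (Prod.snd ∘ g) := by
  rcases Nat.eq_zero_or_pos α with rfl | hα₀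
  · obtain rfl : β = 0 := by omega
    obtain rfl : γ = 0 := by omega
    exact ⟨Embedding.ofIsEmpty, finZeroElim, finZeroElim⟩
  obtain ⟨hβ₀, hγ₀⟩ : 0 < β ∧ 0 < γ := CanonicallyOrderedAdd.mul_pos.mp (by omega)
  -- a staircase of `max β γ ≤ α` cells already meets every row and column; enlarge it to `α` cells
  let stair (t : Fin (max β γ)) : Fin β × Fin γ :=
    (⟨min t (β - 1), by omega⟩, ⟨min t (γ - 1), by omega⟩)
  obtain ⟨X, hstair, -, hX⟩ := exists_subsuperset_card_eq (n := α)
    (subset_univ (univ.image stair)) (card_image_le.trans (by simpa using max_le hβ hγ))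
    (by simpa using hα)
  let e : Fin α ≃ X := (Fintype.equivFinOfCardEq (by simpa using hX)).symm
  have hstair_mem (t) : stair t ∈ X := hstair (mem_image_of_mem _ (mem_univ t))
  refine ⟨e.toEmbedding.trans (Embedding.subtype _), fun j => ?_, fun l => ?_⟩
  · exact ⟨e.symm ⟨_, hstair_mem ⟨j, by omega⟩⟩,
      by simpa [stair, Fin.ext_iff] using Nat.le_sub_one_of_lt j.2⟩
  · exact ⟨e.symm ⟨_, hstair_mem ⟨l, by omega⟩⟩,
      by simpa [stair, Fin.ext_iff] using Nat.le_sub_one_of_lt l.2⟩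

theorem exists_tensor_rank_flattening_eq_of_le_left {k : Type*} [Field k]
    {n₁ n₂ n₃ μ₁ μ₂ μ₃ : ℕ} (h₁ : μ₁ ≤ n₁) (h₂ : μ₂ ≤ n₂) (h₃ : μ₃ ≤ n₃) (h₂₁ : μ₂ ≤ μ₁)
    (h₃₁ : μ₃ ≤ μ₁) (h₁₂₃ : μ₁ ≤ μ₂ * μ₃) :
    ∃ T : Fin n₁ → Fin n₂ → Fin n₃ → k,
      (flattening₁ T).rank = μ₁ ∧ (flattening₂ T).rank = μ₂ ∧ (flattening₃ T).rank = μ₃ := by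
  obtain ⟨g, hg₂, hg₃⟩ := exists_embedding_fin_prod_surjective h₂₁ h₃₁ h₁₂₃
  have ha := Fin.castLE_injective h₁
  obtain ⟨T, hT₁, hT₂, hT₃⟩ := exists_tensor_rank_flattening_eq_card_image (k := k)
    (Fin.castLE h₁) (Fin.castLE h₂ ∘ Prod.fst ∘ g) (Fin.castLE h₃ ∘ Prod.snd ∘ g)
    (fun t t' h => g.injective (Prod.ext (Fin.castLE_injective h₂ (congrArg Prod.fst h))
      (Fin.castLE_injective h₃ (congrArg Prod.snd h))))
    (fun t t' h => ha (congrArg Prod.fst h)) (fun t t' h => ha (congrArg Prod.fst h))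
  refine ⟨T, ?_, ?_, ?_⟩
  · rw [hT₁, card_image_of_injective _ ha, card_univ, Fintype.card_fin]
  · rw [hT₂, ← image_image, image_univ_of_surjective hg₂,
      card_image_of_injective _ (Fin.castLE_injective h₂), card_univ, Fintype.card_fin]
  · rw [hT₃, ← image_image, image_univ_of_surjective hg₃,
      card_image_of_injective _ (Fin.castLE_injective h₃), card_univ, Fintype.card_fin]

theorem exists_tensor_rank_flattening_eq {k : Type*} [Field k] {n₁ n₂ n₃ μ₁ μ₂ μ₃ : ℕ}
    (h₁ : μ₁ ≤ n₁) (h₂ : μ₂ ≤ n₂) (h₃ : μ₃ ≤ n₃) (h₁₂₃ : μ₁ ≤ μ₂ * μ₃) (h₂₁₃ : μ₂ ≤ μ₁ * μ₃)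
    (h₃₁₂ : μ₃ ≤ μ₁ * μ₂) :
    ∃ T : Fin n₁ → Fin n₂ → Fin n₃ → k,
      (flattening₁ T).rank = μ₁ ∧ (flattening₂ T).rank = μ₂ ∧ (flattening₃ T).rank = μ₃ := by
  by_cases h₁_max : μ₂ ≤ μ₁ ∧ μ₃ ≤ μ₁
  · exact exists_tensor_rank_flattening_eq_of_le_left h₁ h₂ h₃ h₁_max.1 h₁_max.2 h₁₂₃
  by_cases h₃₂ : μ₃ ≤ μ₂
  · obtain ⟨T, hT₂, hT₁, hT₃⟩ := exists_tensor_rank_flattening_eq_of_le_left (k := k)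
      h₂ h₁ h₃ (by omega) h₃₂ h₂₁₃
    exact ⟨fun i j l => T j i l, hT₁, hT₂, (rank_of_prod_swap (flattening₃ T)).trans hT₃⟩
  · obtain ⟨T, hT₃, hT₁, hT₂⟩ := exists_tensor_rank_flattening_eq_of_le_left (k := k)
      h₃ h₁ h₂ (by omega) (by omega) h₃₁₂
    exact ⟨fun i j l => T l i j, (rank_of_prod_swap (flattening₂ T)).trans hT₁,
      (rank_of_prod_swap (flattening₃ T)).trans hT₂, hT₃⟩

theorem exists_tensor_with_multilinear_rank_iff_general {k : Type*} [Field k]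
    {n₁ n₂ n₃ μ₁ μ₂ μ₃ : ℕ} :
    (∃ T : Fin n₁ → Fin n₂ → Fin n₃ → k,
        (Matrix.of fun i (p : Fin n₂ × Fin n₃) => T i p.1 p.2).rank = μ₁ ∧
        (Matrix.of fun j (p : Fin n₁ × Fin n₃) => T p.1 j p.2).rank = μ₂ ∧
        (Matrix.of fun l (p : Fin n₁ × Fin n₂) => T p.1 p.2 l).rank = μ₃) ↔
      (μ₁ ≤ n₁ ∧ μ₂ ≤ n₂ ∧ μ₃ ≤ n₃ ∧ μ₁ ≤ μ₂ * μ₃ ∧ μ₂ ≤ μ₁ * μ₃ ∧ μ₃ ≤ μ₁ * μ₂) := by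
  constructor
  · rintro ⟨T, rfl, rfl, rfl⟩
    refine ⟨?_, ?_, ?_, rank_flattening₁_le_mul T, rank_flattening₂_le_mul T,
      rank_flattening₃_le_mul T⟩ <;> exact (rank_le_card_height _).trans_eq (Fintype.card_fin _)
  · rintro ⟨h₁, h₂, h₃, h₁₂₃, h₂₁₃, h₃₁₂⟩
    exact exists_tensor_rank_flattening_eq h₁ h₂ h₃ h₁₂₃ h₂₁₃ h₃₁₂

/-- Carlini–Kleppe characterization for order-3 tensors: there exists a tensor
`T ∈ k^{n₁} ⊗ k^{n₂} ⊗ k^{n₃}` with multilinear rank `(μ₁, μ₂, μ₃)` if and only if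
`μᵢ ≤ nᵢ` for all `i` and `μ₁ ≤ μ₂μ₃`, `μ₂ ≤ μ₁μ₃`, `μ₃ ≤ μ₁μ₂`. -/
theorem exists_tensor_with_multilinear_rank_iff {k : Type*} [Field k] [Infinite k]
    {n₁ n₂ n₃ μ₁ μ₂ μ₃ : ℕ}
    (hn₁ : 0 < n₁) (hn₂ : 0 < n₂) (hn₃ : 0 < n₃)
    (hμ₁ : 0 < μ₁) (hμ₂ : 0 < μ₂) (hμ₃ : 0 < μ₃) :
    (∃ T : Fin n₁ → Fin n₂ → Fin n₃ → k,
        (Matrix.of fun i (p : Fin n₂ × Fin n₃) => T i p.1 p.2).rank = μ₁ ∧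
        (Matrix.of fun j (p : Fin n₁ × Fin n₃) => T p.1 j p.2).rank = μ₂ ∧
        (Matrix.of fun l (p : Fin n₁ × Fin n₂) => T p.1 p.2 l).rank = μ₃) ↔
      (μ₁ ≤ n₁ ∧ μ₂ ≤ n₂ ∧ μ₃ ≤ n₃ ∧ μ₁ ≤ μ₂ * μ₃ ∧ μ₂ ≤ μ₁ * μ₃ ∧ μ₃ ≤ μ₁ * μ₂) :=
  exists_tensor_with_multilinear_rank_iff_general
end

section
/- Let G be a path graph with vertices 1—2—3 (tensor train of order 3) with bond dimensions r₁₂, r₂₃, physical dimensions n₁, n₂, n₃. The bond tuple (r₁₂, r₂₃) is admissible (i.e., some representable tensor requires exactly these bonds) if and only if r₁₂ ≤ n₁, r₂₃ ≤ n₃, r₁₂ ≤ n₂·r₂₃, and r₂₃ ≤ n₂·r₁₂. -/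
/-!
A representation with bonds `(s₁, s₂)` can always be recompressed: absorbing `A₁` into the
middle core gives bonds `(n₁, s₂)`, absorbing the middle core into `A₁` gives `(n₂ s₂, s₂)`.
Minimality forbids both from being smaller, and reversing the train gives the other two bounds.

Conversely, a representation factors the flattening `T₍₁₎` through `k^{s₁}`, so
`rank T₍₁₎ ≤ s₁` and `rank T₍₃₎ ≤ s₂`. For `a ≤ b` the tensor
`∑_{l < b} e_{l mod a} ⊗ e_{l / a} ⊗ e_l` has bonds `(a, b)` and flattenings of ranks `a` and `b`
(both contain an identity submatrix), so `(a, b)` is its minimal bond tuple.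
-/

/-- `T` is representable by an order-3 tensor train with bond dimensions `(s₁, s₂)`. -/
def TTRepresents {k : Type*} [Field k] {n₁ n₂ n₃ : ℕ} (s₁ s₂ : ℕ)
    (T : Fin n₁ → Fin n₂ → Fin n₃ → k) : Prop :=
  ∃ (A₁ : Matrix (Fin n₁) (Fin s₁) k) (A₂ : Fin s₁ → Fin n₂ → Fin s₂ → k)
    (A₃ : Matrix (Fin s₂) (Fin n₃) k),
    ∀ i j l, T i j l = ∑ α, ∑ β, A₁ i α * A₂ α j β * A₃ β l

/-- The bond tuple `(r₁₂, r₂₃)` is minimal for `T`: `T` is representable with these bonds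
and no componentwise smaller tuple also represents `T`. -/
def TTMinimal {k : Type*} [Field k] {n₁ n₂ n₃ : ℕ} (r₁₂ r₂₃ : ℕ)
    (T : Fin n₁ → Fin n₂ → Fin n₃ → k) : Prop :=
  TTRepresents r₁₂ r₂₃ T ∧
    ∀ s₁ s₂ : ℕ, s₁ ≤ r₁₂ → s₂ ≤ r₂₃ → TTRepresents s₁ s₂ T → s₁ = r₁₂ ∧ s₂ = r₂₃

open Matrix Finset

theorem Fin.sum_ite_val_eq {M : Type*} [AddCommMonoid M] {n : ℕ} (f : Fin n → M) (m : ℕ) :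
    (∑ x : Fin n, if (x : ℕ) = m then f x else 0) = if h : m < n then f ⟨m, h⟩ else 0 := by
  split_ifs with h
  · rw [sum_eq_single ⟨m, h⟩ fun x _ hx => if_neg fun hxm => hx (Fin.ext hxm)] <;> simp
  · exact sum_eq_zero fun x _ => if_neg fun hxm : (x : ℕ) = m => h (hxm ▸ x.2)

theorem Matrix.le_rank_of_submatrix_eq_one {R m n : Type*} [CommSemiring R]
    [StrongRankCondition R] [Fintype n] {r : ℕ} (A : Matrix m n R) (f : Fin r → m)
    (g : Fin r → n) (h : A.submatrix f g = 1) : r ≤ A.rank := by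
  simpa [h] using A.rank_submatrix_le f g

section

variable {k : Type*} [Field k] {n₁ n₂ n₃ : ℕ}

def tensorReverse (T : Fin n₁ → Fin n₂ → Fin n₃ → k) : Fin n₃ → Fin n₂ → Fin n₁ → k :=
  fun l j i => T i j l

def flatten₁ (T : Fin n₁ → Fin n₂ → Fin n₃ → k) : Matrix (Fin n₁) (Fin n₂ × Fin n₃) k :=
  Matrix.of fun i p => T i p.1 p.2

theorem ttRepresents_of_sum {ι κ : Type*} [Fintype ι] [Fintype κ]
    {T : Fin n₁ → Fin n₂ → Fin n₃ → k} (A₁ : Fin n₁ → ι → k) (A₂ : ι → Fin n₂ → κ → k)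
    (A₃ : κ → Fin n₃ → k) (hT : ∀ i j l, T i j l = ∑ α, ∑ β, A₁ i α * A₂ α j β * A₃ β l) :
    TTRepresents (Fintype.card ι) (Fintype.card κ) T := by
  let e := Fintype.equivFin ι
  let f := Fintype.equivFin κ
  refine ⟨fun i α => A₁ i (e.symm α), fun α j β => A₂ (e.symm α) j (f.symm β),
    fun β l => A₃ (f.symm β) l, fun i j l => ?_⟩
  rw [hT, ← e.symm.sum_comp]
  exact sum_congr rfl fun α _ => (f.symm.sum_comp _).symm

namespace TTRepresents

variable {s₁ s₂ : ℕ} {T : Fin n₁ → Fin n₂ → Fin n₃ → k}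

theorem reverse (h : TTRepresents s₁ s₂ T) : TTRepresents s₂ s₁ (tensorReverse T) := by
  obtain ⟨A₁, A₂, A₃, hT⟩ := h
  refine ⟨A₃.transpose, fun β j α => A₂ α j β, A₁.transpose, fun l j i => ?_⟩
  simp only [tensorReverse, hT, transpose_apply]
  rw [sum_comm]
  exact sum_congr rfl fun β _ => sum_congr rfl fun α _ => by ring

theorem compress_left_to_dim (h : TTRepresents s₁ s₂ T) : TTRepresents n₁ s₂ T := by
  obtain ⟨A₁, A₂, A₃, hT⟩ := h
  simpa using ttRepresents_of_sum (1 : Matrix (Fin n₁) (Fin n₁) k)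
    (fun γ j β => ∑ α, A₁ γ α * A₂ α j β) A₃ fun i j l => by
      simp only [hT, one_apply, ite_mul, one_mul, zero_mul, sum_mul, sum_ite_irrel,
        sum_const_zero, sum_ite_eq, mem_univ, if_true]
      exact sum_comm

theorem compress_left_to_mul (h : TTRepresents s₁ s₂ T) : TTRepresents (n₂ * s₂) s₂ T := by
  obtain ⟨A₁, A₂, A₃, hT⟩ := h
  simpa using ttRepresents_of_sum (fun i (p : Fin n₂ × Fin s₂) => ∑ α, A₁ i α * A₂ α p.1 p.2)
    (fun p j β => if p = (j, β) then 1 else 0) A₃ fun i j l => by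
      rw [hT, sum_comm]
      conv_rhs => rw [sum_comm]
      simp [sum_mul]

theorem rank_flatten₁_le (h : TTRepresents s₁ s₂ T) : (flatten₁ T).rank ≤ s₁ := by
  obtain ⟨A₁, A₂, A₃, hT⟩ := h
  calc (flatten₁ T).rank
      = (A₁ * Matrix.of fun α (p : Fin n₂ × Fin n₃) => ∑ β, A₂ α p.1 β * A₃ β p.2).rank := by
        congr 1
        ext i p
        simp [flatten₁, hT, mul_apply, mul_sum, mul_assoc]
    _ ≤ A₁.rank := rank_mul_le_left _ _
    _ ≤ s₁ := rank_le_width _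

end TTRepresents

namespace TTMinimal

variable {r₁ r₂ : ℕ} {T : Fin n₁ → Fin n₂ → Fin n₃ → k}

theorem reverse (h : TTMinimal r₁ r₂ T) : TTMinimal r₂ r₁ (tensorReverse T) :=
  ⟨h.1.reverse, fun s₁ s₂ hs₁ hs₂ hs => (h.2 s₂ s₁ hs₂ hs₁ hs.reverse).symm⟩

theorem le_of_ttRepresents {s : ℕ} (h : TTMinimal r₁ r₂ T) (hs : TTRepresents s r₂ T) :
    r₁ ≤ s := by
  by_contra! hlt
  exact hlt.ne (h.2 s r₂ hlt.le le_rfl hs).1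

theorem left_bond_le (h : TTMinimal r₁ r₂ T) : r₁ ≤ n₁ ∧ r₁ ≤ n₂ * r₂ :=
  ⟨h.le_of_ttRepresents h.1.compress_left_to_dim, h.le_of_ttRepresents h.1.compress_left_to_mul⟩

end TTMinimal

theorem ttMinimal_of_le_rank {r₁ r₂ : ℕ} {T : Fin n₁ → Fin n₂ → Fin n₃ → k}
    (hT : TTRepresents r₁ r₂ T) (h₁ : r₁ ≤ (flatten₁ T).rank)
    (h₂ : r₂ ≤ (flatten₁ (tensorReverse T)).rank) : TTMinimal r₁ r₂ T :=
  ⟨hT, fun _ _ hs₁ hs₂ hs =>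
    ⟨hs₁.antisymm (h₁.trans hs.rank_flatten₁_le),
      hs₂.antisymm (h₂.trans hs.reverse.rank_flatten₁_le)⟩⟩

def modelTensor (k : Type*) [Field k] (n₁ n₂ n₃ a b : ℕ) : Fin n₁ → Fin n₂ → Fin n₃ → k :=
  fun i j l => if (i : ℕ) < a ∧ (l : ℕ) = j * a + i ∧ (l : ℕ) < b then 1 else 0

theorem ttRepresents_modelTensor (a b : ℕ) : TTRepresents a b (modelTensor k n₁ n₂ n₃ a b) := by
  refine ⟨Matrix.of fun i α => if (α : ℕ) = i then 1 else 0,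
    fun α j β => if (β : ℕ) = j * a + α then 1 else 0,
    Matrix.of fun β l => if (β : ℕ) = l then 1 else 0, fun i j l => ?_⟩
  simp only [of_apply, ite_mul, one_mul, zero_mul]
  rw [sum_comm]
  simp only [Fin.sum_ite_val_eq, sum_dite_irrel, sum_const_zero, modelTensor]
  split_ifs <;> first | rfl | omega

variable {a b : ℕ}

theorem le_rank_flatten₁_modelTensor (hab : a ≤ b) (h₁ : a ≤ n₁) (h₃ : b ≤ n₃)
    (hb : b ≤ n₂ * a) : a ≤ (flatten₁ (modelTensor k n₁ n₂ n₃ a b)).rank := by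
  have hn₂ (α : Fin a) : 0 < n₂ := Nat.pos_of_ne_zero fun h => by
    simp only [h, zero_mul] at hb
    exact absurd α.2 (by omega)
  refine (flatten₁ _).le_rank_of_submatrix_eq_one (Fin.castLE h₁)
    (fun α => (⟨0, hn₂ α⟩, Fin.castLE (hab.trans h₃) α)) ?_
  ext α β
  have := α.isLt
  have := β.isLt
  simp only [submatrix_apply, flatten₁, modelTensor, of_apply, one_apply, Fin.ext_iff,
    Fin.val_castLE]
  split_ifs <;> first | rfl | omega

theorem le_rank_flatten₁_reverse_modelTensor (h₁ : a ≤ n₁) (h₃ : b ≤ n₃) (hb : b ≤ n₂ * a) :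
    b ≤ (flatten₁ (tensorReverse (modelTensor k n₁ n₂ n₃ a b))).rank := by
  have ha (β : Fin b) : 0 < a := Nat.pos_of_ne_zero fun h => by
    simp only [h, mul_zero] at hb
    exact absurd β.2 (by omega)
  refine (flatten₁ _).le_rank_of_submatrix_eq_one (Fin.castLE h₃)
    (fun β => (⟨β / a, Nat.div_lt_of_lt_mul (by rw [mul_comm]; exact β.2.trans_le hb)⟩,
      ⟨β % a, (Nat.mod_lt _ (ha β)).trans_le h₁⟩)) ?_
  ext β γ
  have := β.isLt
  have := γ.isLt
  have := Nat.div_add_mod' (γ : ℕ) a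
  have := Nat.mod_lt (γ : ℕ) (ha γ)
  simp only [submatrix_apply, flatten₁, tensorReverse, modelTensor, of_apply, one_apply,
    Fin.ext_iff, Fin.val_castLE]
  split_ifs <;> first | rfl | omega

theorem ttMinimal_modelTensor (hab : a ≤ b) (h₁ : a ≤ n₁) (h₃ : b ≤ n₃) (hb : b ≤ n₂ * a) :
    TTMinimal a b (modelTensor k n₁ n₂ n₃ a b) :=
  ttMinimal_of_le_rank (ttRepresents_modelTensor a b) (le_rank_flatten₁_modelTensor hab h₁ h₃ hb)
    (le_rank_flatten₁_reverse_modelTensor h₁ h₃ hb)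

end

theorem tt_admissible_iff_general {k : Type*} [Field k] {n₁ n₂ n₃ r₁₂ r₂₃ : ℕ} :
    (∃ T : Fin n₁ → Fin n₂ → Fin n₃ → k, TTMinimal r₁₂ r₂₃ T) ↔
      (r₁₂ ≤ n₁ ∧ r₂₃ ≤ n₃ ∧ r₁₂ ≤ n₂ * r₂₃ ∧ r₂₃ ≤ n₂ * r₁₂) := by
  constructor
  · rintro ⟨T, hT⟩
    exact ⟨hT.left_bond_le.1, hT.reverse.left_bond_le.1, hT.left_bond_le.2,
      hT.reverse.left_bond_le.2⟩
  · rintro ⟨h₁, h₃, h₁₃, h₃₁⟩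
    rcases le_total r₁₂ r₂₃ with h | h
    · exact ⟨_, ttMinimal_modelTensor h h₁ h₃ h₃₁⟩
    · exact ⟨_, (ttMinimal_modelTensor h h₃ h₁ h₁₃).reverse⟩

/-- For the order-3 tensor train (path graph 1—2—3), the bond tuple `(r₁₂, r₂₃)` is
admissible, i.e., some tensor has it as its minimal bond tuple, if and only if
`r₁₂ ≤ n₁`, `r₂₃ ≤ n₃`, `r₁₂ ≤ n₂ r₂₃` and `r₂₃ ≤ n₂ r₁₂`. -/
theorem tt_admissible_iff {k : Type*} [Field k] [Infinite k] {n₁ n₂ n₃ r₁₂ r₂₃ : ℕ}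
    (hn₁ : 0 < n₁) (hn₂ : 0 < n₂) (hn₃ : 0 < n₃) (hr₁₂ : 0 < r₁₂) (hr₂₃ : 0 < r₂₃) :
    (∃ T : Fin n₁ → Fin n₂ → Fin n₃ → k, TTMinimal r₁₂ r₂₃ T) ↔
      (r₁₂ ≤ n₁ ∧ r₂₃ ≤ n₃ ∧ r₁₂ ≤ n₂ * r₂₃ ∧ r₂₃ ≤ n₂ * r₁₂) :=
  tt_admissible_iff_general
end

section
/- For an order-3 tensor train with cores A₁ ∈ k^{n₁×r₁₂}, A₂ ∈ k^{r₁₂×n₂×r₂₃}, A₃ ∈ k^{r₂₃×n₃}: if rank A₁ = r₁₂, rank A₃ = r₂₃, and the flattening of A₂ separating the second bond index (an (r₁₂·n₂) × r₂₃ matrix) has rank r₂₃, then the flattening of the represented tensor T separating mode 3 from modes 1 and 2 has rank exactly r₂₃. -/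
open Module

/-- Full column rank implies `mulVecLin` is injective. -/
lemma mulVecLin_injective_of_rank {k : Type*} [Field k] {m n : Type*} [Fintype n]
    (B : Matrix m n k) (h : B.rank = Fintype.card n) :
    Function.Injective B.mulVecLin := by
  rw [← LinearMap.ker_eq_bot]
  have := LinearMap.finrank_range_add_finrank_ker B.mulVecLin
  rw [Matrix.rank] at h
  rw [h, Module.finrank_fintype_fun_eq_card] at this
  have hk : finrank k (LinearMap.ker B.mulVecLin) = 0 := by omega
  exact Submodule.finrank_eq_zero.1 hk

/-- Left multiplication by a matrix with injective `mulVecLin` preserves rank. -/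
lemma rank_mul_eq_of_injective {k : Type*} [Field k] {m n o : Type*} [Fintype n] [Fintype o]
    (B : Matrix m n k) (C : Matrix n o k) (hB : Function.Injective B.mulVecLin) :
    (B * C).rank = C.rank := by
  rw [Matrix.rank, Matrix.rank, Matrix.mulVecLin_mul, LinearMap.range_comp]
  exact LinearEquiv.finrank_eq
    ((Submodule.equivMapOfInjective _ hB (LinearMap.range C.mulVecLin)).symm)

/-- Edge-rank lemma, order-3 tensor-train instance: if the cores `A₁, A₃` have full
column/row ranks `r₁₂`, `r₂₃` and the flattening of `A₂` separating the second bond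
index has rank `r₂₃`, then the flattening of the represented tensor `T` separating
mode 3 from modes 1 and 2 has rank exactly `r₂₃`. -/
theorem tt_edge_rank {k : Type*} [Field k] {n₁ n₂ n₃ r₁₂ r₂₃ : ℕ}
    (A₁ : Matrix (Fin n₁) (Fin r₁₂) k) (A₂ : Fin r₁₂ → Fin n₂ → Fin r₂₃ → k)
    (A₃ : Matrix (Fin r₂₃) (Fin n₃) k)
    (hA₁ : A₁.rank = r₁₂)
    (hA₂ : (Matrix.of fun (p : Fin r₁₂ × Fin n₂) β => A₂ p.1 p.2 β).rank = r₂₃)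
    (hA₃ : A₃.rank = r₂₃)
    (T : Fin n₁ → Fin n₂ → Fin n₃ → k)
    (hT : ∀ i j l, T i j l = ∑ α, ∑ β, A₁ i α * A₂ α j β * A₃ β l) :
    (Matrix.of fun (p : Fin n₁ × Fin n₂) l => T p.1 p.2 l).rank = r₂₃ := by
  classical
  set A₂f : Matrix (Fin r₁₂ × Fin n₂) (Fin r₂₃) k :=
    Matrix.of fun p β => A₂ p.1 p.2 β with hA₂f
  set K : Matrix (Fin n₁ × Fin n₂) (Fin r₁₂ × Fin n₂) k :=
    Matrix.of fun p q => A₁ p.1 q.1 * (if p.2 = q.2 then (1:k) else 0) with hK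
  set B : Matrix (Fin n₁ × Fin n₂) (Fin r₂₃) k :=
    Matrix.of fun p β => ∑ α, A₁ p.1 α * A₂ α p.2 β with hB
  -- K has injective mulVecLin
  have hA₁inj : Function.Injective A₁.mulVecLin :=
    mulVecLin_injective_of_rank A₁ (by simpa using hA₁)
  have hKinj : Function.Injective K.mulVecLin := by
    rw [← LinearMap.ker_eq_bot, LinearMap.ker_eq_bot']
    intro v hv
    funext q
    have hvj : A₁.mulVecLin (fun α => v (α, q.2)) = 0 := by
      funext i
      have := congrFun hv (i, q.2)
      simp only [Matrix.mulVecLin_apply, Matrix.mulVec, dotProduct, hK,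
        Matrix.of_apply, Pi.zero_apply, Fintype.sum_prod_type] at this ⊢
      rw [← this]
      refine Finset.sum_congr rfl fun α _ => ?_
      rw [Finset.sum_eq_single q.2]
      · simp
      · intro b _ hb; simp [Ne.symm hb]
      · simp
    have := hA₁inj (by simpa using hvj : A₁.mulVecLin (fun α => v (α, q.2)) = A₁.mulVecLin 0)
    exact congrFun this q.1
  -- B = K * A₂f
  have hBeq : B = K * A₂f := by
    ext p β
    simp only [hB, hK, hA₂f, Matrix.mul_apply, Matrix.of_apply, Fintype.sum_prod_type]
    refine Finset.sum_congr rfl fun α _ => ?_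
    rw [Finset.sum_eq_single p.2]
    · simp
    · intro b _ hb; simp [Ne.symm hb]
    · simp
  -- rank B = r₂₃
  have hBrank : B.rank = r₂₃ := by
    rw [hBeq, rank_mul_eq_of_injective _ _ hKinj]; exact hA₂
  have hBinj : Function.Injective B.mulVecLin :=
    mulVecLin_injective_of_rank B (by simpa using hBrank)
  -- T₃ = B * A₃
  have hTeq : (Matrix.of fun (p : Fin n₁ × Fin n₂) l => T p.1 p.2 l) = B * A₃ := by
    ext p l
    rw [Matrix.of_apply, hT, Matrix.mul_apply]
    simp only [hB, Matrix.of_apply, Finset.sum_mul]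
    rw [Finset.sum_comm]
  rw [hTeq, rank_mul_eq_of_injective _ _ hBinj, hA₃]
end

section
/- Let n₁, n₂, n₃, r₁, r₂, r₃ be positive integers with rᵢ ≤ nᵢ for all i and r₁ ≤ r₂r₃, r₂ ≤ r₁r₃, r₃ ≤ r₁r₂. Then there exists a core tensor C ∈ k^{r₁} ⊗ k^{r₂} ⊗ k^{r₃} all of whose three mode flattening ranks are maximal, i.e., equal to (r₁, r₂, r₃). -/
open Matrix MvPolynomial

lemma rank_eq_of_submatrix_unit {k : Type*} [Field k] {r : ℕ} {N : Type*} [Fintype N]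
    [DecidableEq N] (M : Matrix (Fin r) N k) (f : Fin r → N)
    (hdet : (M.submatrix id f).det ≠ 0) : M.rank = r := by
  have hsub : M.submatrix id f = M * (Matrix.of fun p a' => if p = f a' then (1:k) else 0) := by
    ext a a'
    simp [Matrix.mul_apply, Matrix.submatrix_apply]
  have h1 : (M.submatrix id f).rank = r := by
    rw [Matrix.rank_of_isUnit _ ((Matrix.isUnit_iff_isUnit_det _).mpr (isUnit_iff_ne_zero.mpr hdet))]
    simp
  have h2 : (M.submatrix id f).rank ≤ M.rank := by
    rw [hsub]; exact Matrix.rank_mul_le_left _ _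
  have h3 : M.rank ≤ r := by simpa using Matrix.rank_le_card_height M
  omega

/-- Under the admissibility inequalities `rᵢ ≤ rⱼ rₗ`, there exists a core tensor
`C ∈ k^{r₁} ⊗ k^{r₂} ⊗ k^{r₃}` all of whose three mode flattening ranks are maximal,
i.e., equal to `(r₁, r₂, r₃)`. -/
theorem exists_full_multilinear_rank_core {k : Type*} [Field k] [Infinite k]
    {r₁ r₂ r₃ : ℕ} (h₁ : 0 < r₁) (h₂ : 0 < r₂) (h₃ : 0 < r₃)
    (h₁₂ : r₁ ≤ r₂ * r₃) (h₂₃ : r₂ ≤ r₁ * r₃) (h₃₁ : r₃ ≤ r₁ * r₂) :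
    ∃ C : Fin r₁ → Fin r₂ → Fin r₃ → k,
      (Matrix.of fun a (p : Fin r₂ × Fin r₃) => C a p.1 p.2).rank = r₁ ∧
      (Matrix.of fun b (p : Fin r₁ × Fin r₃) => C p.1 b p.2).rank = r₂ ∧
      (Matrix.of fun c (p : Fin r₁ × Fin r₂) => C p.1 p.2 c).rank = r₃ := by
  classical
  obtain ⟨f₁⟩ : Nonempty (Fin r₁ ↪ Fin r₂ × Fin r₃) :=
    Function.Embedding.nonempty_of_card_le (by simpa using h₁₂)
  obtain ⟨f₂⟩ : Nonempty (Fin r₂ ↪ Fin r₁ × Fin r₃) :=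
    Function.Embedding.nonempty_of_card_le (by simpa using h₂₃)
  obtain ⟨f₃⟩ : Nonempty (Fin r₃ ↪ Fin r₁ × Fin r₂) :=
    Function.Embedding.nonempty_of_card_le (by simpa using h₃₁)
  set R := MvPolynomial (Fin 3) k
  set Cp : Fin r₁ → Fin r₂ → Fin r₃ → R := fun a b c =>
    X 0 * (if f₁ a = (b, c) then 1 else 0) +
    X 1 * (if f₂ b = (a, c) then 1 else 0) +
    X 2 * (if f₃ c = (a, b) then 1 else 0) with hCp
  set M₁ : Matrix (Fin r₁) (Fin r₁) R := Matrix.of fun a a' => Cp a (f₁ a').1 (f₁ a').2 with hM₁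
  set M₂ : Matrix (Fin r₂) (Fin r₂) R := Matrix.of fun b b' => Cp (f₂ b').1 b (f₂ b').2 with hM₂
  set M₃ : Matrix (Fin r₃) (Fin r₃) R := Matrix.of fun c c' => Cp (f₃ c').1 (f₃ c').2 c with hM₃
  have hP₁ : M₁.det ≠ 0 := by
    intro h
    have := congrArg (MvPolynomial.eval (fun j => if j = (0 : Fin 3) then (1:k) else 0)) h
    rw [RingHom.map_det, _root_.map_zero, RingHom.mapMatrix_apply] at this
    have hid : M₁.map (MvPolynomial.eval (fun j => if j = (0 : Fin 3) then (1:k) else 0)) = 1 := by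
      ext a a'
      simp only [hM₁, hCp, Matrix.map_apply, Matrix.of_apply, _root_.map_add, _root_.map_mul,
        eval_X]
      norm_num
      simp [apply_ite (MvPolynomial.eval fun j => if j = (0:Fin 3) then (1:k) else 0),
        Matrix.one_apply, f₁.injective.eq_iff, eq_comm]
    rw [hid, Matrix.det_one] at this
    simp at this
  have hP₂ : M₂.det ≠ 0 := by
    intro h
    have := congrArg (MvPolynomial.eval (fun j => if j = (1 : Fin 3) then (1:k) else 0)) h
    rw [RingHom.map_det, _root_.map_zero, RingHom.mapMatrix_apply] at this
    have hid : M₂.map (MvPolynomial.eval (fun j => if j = (1 : Fin 3) then (1:k) else 0)) = 1 := by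
      ext b b'
      simp only [hM₂, hCp, Matrix.map_apply, Matrix.of_apply, _root_.map_add, _root_.map_mul,
        eval_X]
      norm_num
      simp [apply_ite (MvPolynomial.eval fun j => if j = (1:Fin 3) then (1:k) else 0),
        Matrix.one_apply, f₂.injective.eq_iff, eq_comm]
    rw [hid, Matrix.det_one] at this
    simp at this
  have hP₃ : M₃.det ≠ 0 := by
    intro h
    have := congrArg (MvPolynomial.eval (fun j => if j = (2 : Fin 3) then (1:k) else 0)) h
    rw [RingHom.map_det, _root_.map_zero, RingHom.mapMatrix_apply] at this
    have hid : M₃.map (MvPolynomial.eval (fun j => if j = (2 : Fin 3) then (1:k) else 0)) = 1 := by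
      ext c c'
      simp only [hM₃, hCp, Matrix.map_apply, Matrix.of_apply, _root_.map_add, _root_.map_mul,
        eval_X]
      norm_num
      simp [apply_ite (MvPolynomial.eval fun j => if j = (2:Fin 3) then (1:k) else 0),
        Matrix.one_apply, f₃.injective.eq_iff, eq_comm]
    rw [hid, Matrix.det_one] at this
    simp at this
  have hP : M₁.det * M₂.det * M₃.det ≠ 0 := mul_ne_zero (mul_ne_zero hP₁ hP₂) hP₃
  have hv : ∃ v : Fin 3 → k, MvPolynomial.eval v (M₁.det * M₂.det * M₃.det) ≠ 0 := by
    by_contra hc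
    push_neg at hc
    exact hP (MvPolynomial.funext fun v => by simpa using hc v)
  obtain ⟨v, hv⟩ := hv
  rw [_root_.map_mul, _root_.map_mul] at hv
  have hv₁ : MvPolynomial.eval v M₁.det ≠ 0 := fun h => hv (by simp [h])
  have hv₂ : MvPolynomial.eval v M₂.det ≠ 0 := fun h => hv (by simp [h])
  have hv₃ : MvPolynomial.eval v M₃.det ≠ 0 := fun h => hv (by simp [h])
  refine ⟨fun a b c => MvPolynomial.eval v (Cp a b c), ?_, ?_, ?_⟩
  · refine rank_eq_of_submatrix_unit _ (fun a' => f₁ a') ?_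
    have h : ((Matrix.of fun a (p : Fin r₂ × Fin r₃) =>
        MvPolynomial.eval v (Cp a p.1 p.2)).submatrix id fun a' => f₁ a')
        = M₁.map (MvPolynomial.eval v) := by
      ext a a'; rfl
    rw [h, ← RingHom.mapMatrix_apply, ← RingHom.map_det]
    exact hv₁
  · refine rank_eq_of_submatrix_unit _ (fun b' => f₂ b') ?_
    have h : ((Matrix.of fun b (p : Fin r₁ × Fin r₃) =>
        MvPolynomial.eval v (Cp p.1 b p.2)).submatrix id fun b' => f₂ b')
        = M₂.map (MvPolynomial.eval v) := by
      ext b b'; rfl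
    rw [h, ← RingHom.mapMatrix_apply, ← RingHom.map_det]
    exact hv₂
  · refine rank_eq_of_submatrix_unit _ (fun c' => f₃ c') ?_
    have h : ((Matrix.of fun c (p : Fin r₁ × Fin r₂) =>
        MvPolynomial.eval v (Cp p.1 p.2 c)).submatrix id fun c' => f₃ c')
        = M₃.map (MvPolynomial.eval v) := by
      ext c c'; rfl
    rw [h, ← RingHom.mapMatrix_apply, ← RingHom.map_det]
    exact hv₃
end
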